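/- f is topologically hyperbolic (i.e., expansive and with the shadowing property) if and only if f admits a shadowing map which is both shift-invariant and dynamically-invariant. -/

import Mathlib

open Filter Metric Topology

variable {M : Type*}

/-- A `δ`-pseudo-orbit of `f`. -/
def IsPseudoOrbit [MetricSpace M] (f : M → M) (δ : ℝ) (x : ℤ → M) : Prop :=
  ∀ i : ℤ, dist (x (i + 1)) (f (x i)) ≤ δ

/-- The set `M̃(f,δ)` of `δ`-pseudo-orbits, as a subset of `M^ℤ` (product topology). -/
def PseudoOrbits [MetricSpace M] (f : M → M) (δ : ℝ) : Set (ℤ → M) :=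
  {x | IsPseudoOrbit f δ x}

/-- The shift `σ`. -/
def shiftSeq (x : ℤ → M) : ℤ → M := fun i => x (i + 1)

/-- The iterated shift `σ^i`. -/
def shiftIter (i : ℤ) (x : ℤ → M) : ℤ → M := fun j => x (j + i)

/-- The orbit map `orb_f(p)_i = f^i(p)`. -/
def orbitMap (f : Equiv.Perm M) (p : M) : ℤ → M := fun i => (f ^ i) p

/-- The metric `d̃_s(x,y) = Σ_{i∈ℤ} 2^{-|i|} d(x_i,y_i)` on `M^ℤ`. -/
noncomputable def dtilde [MetricSpace M] (x y : ℤ → M) : ℝ :=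
  ∑' i : ℤ, (2 : ℝ) ^ (-|i|) * dist (x i) (y i)

/-- A pseudo-orbit map: a continuous map on `M̃(f,δ)` (δ > 0) sending each true orbit
to its initial point. -/
def IsPseudoOrbitMap [MetricSpace M] (f : Equiv.Perm M) (δ : ℝ) (Po : (ℤ → M) → M) : Prop :=
  0 < δ ∧ ContinuousOn Po (PseudoOrbits (⇑f) δ) ∧ ∀ p : M, Po (orbitMap f p) = p

/-- `Po` induces shadowing: for all `ε > 0` there is `γ ∈ (0,δ]` such that every
`γ`-pseudo-orbit `x` satisfies `d(f^i(Po x), x_i) ≤ ε` for all `i`. -/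
def InducesShadowing [MetricSpace M] (f : Equiv.Perm M) (δ : ℝ) (Po : (ℤ → M) → M) : Prop :=
  ∀ ε > (0:ℝ), ∃ γ : ℝ, 0 < γ ∧ γ ≤ δ ∧ ∀ x ∈ PseudoOrbits (⇑f) γ,
    ∀ i : ℤ, dist ((f ^ i) (Po x)) (x i) ≤ ε

/-- The defining condition of a shadowing map. -/
def ShadowingMapCond [MetricSpace M] (f : Equiv.Perm M) (δ : ℝ) (Sh : (ℤ → M) → M) : Prop :=
  ∀ ε > (0:ℝ), ∃ γ : ℝ, 0 < γ ∧ γ ≤ δ ∧ ∀ x ∈ PseudoOrbits (⇑f) γ,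
    ∀ i : ℤ, dist ((f ^ i) (Sh x)) (Sh (shiftIter i x)) ≤ ε

/-- A shadowing map. -/
def IsShadowingMap [MetricSpace M] (f : Equiv.Perm M) (δ : ℝ) (Sh : (ℤ → M) → M) : Prop :=
  IsPseudoOrbitMap f δ Sh ∧ ShadowingMapCond f δ Sh

/-- The shadowing property. -/
def ShadowingProperty [MetricSpace M] (f : Equiv.Perm M) : Prop :=
  ∀ ε > (0:ℝ), ∃ δ > (0:ℝ), ∀ x ∈ PseudoOrbits (⇑f) δ,
    ∃ p : M, ∀ i : ℤ, dist ((f ^ i) p) (x i) ≤ ε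

/-- `x` is a two-sided limit pseudo-orbit: `d(f(x_i), x_{i+1}) → 0` as `|i| → ∞`. -/
def TwoSidedLimit [MetricSpace M] (f : M → M) (x : ℤ → M) : Prop :=
  Tendsto (fun i : ℤ => dist (f (x i)) (x (i + 1))) cofinite (nhds 0)

/-- The defining condition of an L-shadowing map. -/
def LShadowingMapCond [MetricSpace M] (f : Equiv.Perm M) (δ : ℝ) (Sh : (ℤ → M) → M) : Prop :=
  ∀ ε > (0:ℝ), ∃ γ : ℝ, 0 < γ ∧ γ ≤ δ ∧ ∀ x ∈ PseudoOrbits (⇑f) γ, TwoSidedLimit (⇑f) x →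
    (∀ i : ℤ, dist ((f ^ i) (Sh x)) (x i) ≤ ε) ∧
    Tendsto (fun i : ℤ => dist ((f ^ i) (Sh x)) (x i)) cofinite (nhds 0)

/-- An L-shadowing map. -/
def IsLShadowingMap [MetricSpace M] (f : Equiv.Perm M) (δ : ℝ) (Sh : (ℤ → M) → M) : Prop :=
  IsPseudoOrbitMap f δ Sh ∧ LShadowingMapCond f δ Sh

/-- Shift-invariance of a pseudo-orbit map: `Sh(σ x) = f(Sh x)` on `M̃(f,δ)`. -/
def ShiftInvariant [MetricSpace M] (f : Equiv.Perm M) (δ : ℝ) (Sh : (ℤ → M) → M) : Prop :=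
  ∀ x ∈ PseudoOrbits (⇑f) δ, Sh (shiftSeq x) = f (Sh x)

/-- Self-tuning of a pseudo-orbit map. -/
def HasSelfTuning [MetricSpace M] (f : Equiv.Perm M) (δ : ℝ) (Sh : (ℤ → M) → M) : Prop :=
  ∀ ε > (0:ℝ), ∃ γ > (0:ℝ), ∀ x ∈ PseudoOrbits (⇑f) δ, ∀ i : ℤ,
    dtilde (shiftIter i x) (orbitMap f (x i)) < γ →
    dist ((f ^ i) (Sh x)) (Sh (shiftIter i x)) ≤ ε

/-- The connecting map `con_f(p,q)`. -/
def connMap (f : Equiv.Perm M) (p q : M) : ℤ → M :=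
  fun i => if i < 0 then (f ^ i) p else (f ^ i) q

/-- Local stable set `W_ε^s(p)`. -/
def Ws [MetricSpace M] (f : Equiv.Perm M) (ε : ℝ) (p : M) : Set M :=
  {q | ∀ n : ℕ, dist ((f ^ (n : ℤ)) p) ((f ^ (n : ℤ)) q) ≤ ε}

/-- Local unstable set `W_ε^u(p)`. -/
def Wu [MetricSpace M] (f : Equiv.Perm M) (ε : ℝ) (p : M) : Set M :=
  {q | ∀ n : ℕ, dist ((f ^ (-(n : ℤ))) p) ((f ^ (-(n : ℤ))) q) ≤ ε}

/-- Stable set `W^s(p)`. -/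
def WsLim [MetricSpace M] (f : Equiv.Perm M) (p : M) : Set M :=
  {q | Tendsto (fun n : ℕ => dist ((f ^ (n : ℤ)) p) ((f ^ (n : ℤ)) q)) atTop (nhds 0)}

/-- Unstable set `W^u(p)`. -/
def WuLim [MetricSpace M] (f : Equiv.Perm M) (p : M) : Set M :=
  {q | Tendsto (fun n : ℕ => dist ((f ^ (-(n : ℤ))) p) ((f ^ (-(n : ℤ))) q)) atTop (nhds 0)}

/-- A shadowing bracket on `Δ_δ`. -/
def IsShadowingBracket [MetricSpace M] (f : Equiv.Perm M) (δ : ℝ) (br : M → M → M) : Prop :=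
  0 < δ ∧ ContinuousOn (fun pq : M × M => br pq.1 pq.2) {pq : M × M | dist pq.1 pq.2 ≤ δ} ∧
  (∀ p : M, br p p = p) ∧
  ∀ ε > (0:ℝ), ∃ γ : ℝ, 0 < γ ∧ γ ≤ δ ∧
    ∀ p q : M, dist p q ≤ γ → br p q ∈ Ws f ε q ∩ Wu f ε p

/-- An L-bracket on `Δ_δ`. -/
def IsLBracket [MetricSpace M] (f : Equiv.Perm M) (δ : ℝ) (br : M → M → M) : Prop :=
  0 < δ ∧ ContinuousOn (fun pq : M × M => br pq.1 pq.2) {pq : M × M | dist pq.1 pq.2 ≤ δ} ∧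
  (∀ p : M, br p p = p) ∧
  ∀ ε > (0:ℝ), ∃ γ : ℝ, 0 < γ ∧ γ ≤ δ ∧
    ∀ p q : M, dist p q ≤ γ →
      br p q ∈ (Ws f ε q ∩ WsLim f q) ∩ (Wu f ε p ∩ WuLim f p)

/-- cw-expansivity. -/
def CWExpansive [MetricSpace M] (f : Equiv.Perm M) : Prop :=
  ∃ ξ > (0:ℝ), ∀ C : Set M, IsConnected C →
    (∀ i : ℤ, Metric.diam ((f ^ i) '' C) ≤ ξ) → C.Subsingleton

/-- Expansivity. -/
def Expansive [MetricSpace M] (f : Equiv.Perm M) : Prop :=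
  ∃ ξ > (0:ℝ), ∀ p q : M, p ≠ q → ∃ i : ℤ, ξ < dist ((f ^ i) p) ((f ^ i) q)

/-- Dynamical invariance of `Sh_f : M̃(f,δ) → M`: there is `δ' ∈ (0,δ]` such that for
every `x ∈ M̃(f,δ')` the sequence `f∘x` belongs to `M̃(f,δ)` and `Sh_f(f∘x) = f(Sh_f(x))`. -/
def DynInvariant {M : Type*} [MetricSpace M] (f : Equiv.Perm M) (δ : ℝ)
    (Sh : (ℤ → M) → M) : Prop :=
  ∃ δ' : ℝ, 0 < δ' ∧ δ' ≤ δ ∧ ∀ x ∈ PseudoOrbits (⇑f) δ',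
    (fun i : ℤ => f (x i)) ∈ PseudoOrbits (⇑f) δ ∧ Sh (fun i : ℤ => f (x i)) = f (Sh x)

section Helpers
variable {M : Type*}

lemma zpow_succ_apply (f : Equiv.Perm M) (i : ℤ) (p : M) :
    (f ^ (i + 1)) p = f ((f ^ i) p) := by
  rw [add_comm, zpow_one_add, Equiv.Perm.mul_apply]

lemma zpow_pred_apply (f : Equiv.Perm M) (i : ℤ) (p : M) :
    (f ^ (i - 1)) p = f.symm ((f ^ i) p) := by
  have : i - 1 = -1 + i := by ring
  rw [this, zpow_add, Equiv.Perm.mul_apply, zpow_neg_one]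
  rfl

lemma zpow_add_apply (f : Equiv.Perm M) (i j : ℤ) (p : M) :
    (f ^ i) ((f ^ j) p) = (f ^ (i + j)) p := by
  rw [zpow_add, Equiv.Perm.mul_apply]

lemma zpow_continuous [MetricSpace M] (f : Equiv.Perm M) (hf : Continuous (⇑f))
    (hf' : Continuous (⇑f.symm)) (i : ℤ) : Continuous (⇑(f ^ i)) := by
  induction i using Int.induction_on with
  | zero => simpa using continuous_id
  | succ n ih =>
      have : ⇑(f ^ ((n : ℤ) + 1)) = f ∘ ⇑(f ^ (n : ℤ)) := by
        funext p; exact zpow_succ_apply f n p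
      rw [this]; exact hf.comp ih
  | pred n ih =>
      have : ⇑(f ^ (-(n : ℤ) - 1)) = f.symm ∘ ⇑(f ^ (-(n : ℤ))) := by
        funext p; exact zpow_pred_apply f _ p
      rw [this]; exact hf'.comp ih

lemma orbitMap_mem [MetricSpace M] (f : Equiv.Perm M) {δ : ℝ} (hδ : 0 ≤ δ) (p : M) :
    orbitMap f p ∈ PseudoOrbits (⇑f) δ := by
  intro i
  simp only [orbitMap, zpow_succ_apply, dist_self]
  exact hδ

lemma shiftIter_mem [MetricSpace M] (f : Equiv.Perm M) {δ : ℝ} {x : ℤ → M}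
    (hx : x ∈ PseudoOrbits (⇑f) δ) (i : ℤ) : shiftIter i x ∈ PseudoOrbits (⇑f) δ := by
  intro j
  have := hx (j + i)
  simpa [shiftIter, add_right_comm] using this

lemma pseudoOrbits_mono [MetricSpace M] (f : Equiv.Perm M) {γ δ : ℝ} (h : γ ≤ δ)
    {x : ℤ → M} (hx : x ∈ PseudoOrbits (⇑f) γ) : x ∈ PseudoOrbits (⇑f) δ :=
  fun i => (hx i).trans h

end Helpers

lemma isClosed_pseudoOrbits [MetricSpace M] (f : Equiv.Perm M) (hf : Continuous (⇑f)) (δ : ℝ) :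
    IsClosed (PseudoOrbits (⇑f) δ) := by
  have : PseudoOrbits (⇑f) δ = ⋂ i : ℤ, {x : ℤ → M | dist (x (i+1)) (f (x i)) ≤ δ} := by
    ext x; simp [PseudoOrbits, IsPseudoOrbit, Set.mem_iInter]
  rw [this]
  refine isClosed_iInter fun i => ?_
  exact isClosed_le (Continuous.dist (continuous_apply _) (hf.comp (continuous_apply _)))
    continuous_const

lemma eq_orbitMap [MetricSpace M] (f : Equiv.Perm M) {y : ℤ → M}
    (hy : ∀ i : ℤ, y (i + 1) = f (y i)) : y = orbitMap f (y 0) := by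
  funext i
  induction i using Int.induction_on with
  | zero => simp [orbitMap]
  | succ n ih => rw [hy, ih]; simp [orbitMap, zpow_succ_apply]
  | pred n ih =>
      have h1 : y (-(n:ℤ) - 1 + 1) = f (y (-(n:ℤ) - 1)) := hy _
      have h2 : (-(n:ℤ) - 1 + 1) = -(n:ℤ) := by ring
      rw [h2] at h1
      have : y (-(n:ℤ) - 1) = f.symm (y (-(n:ℤ))) := by
        rw [h1]; simp
      rw [this, ih]
      simp only [orbitMap]
      have : -(n:ℤ) - 1 = -1 + -(n:ℤ) := by ring
      rw [this, zpow_add, Equiv.Perm.mul_apply, zpow_neg_one]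
      rfl

lemma shadow_at_zero [MetricSpace M] [CompactSpace M] (f : Equiv.Perm M)
    (hf : Continuous (⇑f)) {δ : ℝ} (hδ : 0 < δ) {Sh : (ℤ → M) → M}
    (hcont : ContinuousOn Sh (PseudoOrbits (⇑f) δ))
    (horb : ∀ p : M, Sh (orbitMap f p) = p) :
    ∀ ε > (0:ℝ), ∃ γ : ℝ, 0 < γ ∧ γ ≤ δ ∧
      ∀ x ∈ PseudoOrbits (⇑f) γ, dist (Sh x) (x 0) ≤ ε := by
  by_contra hcon
  push_neg at hcon
  obtain ⟨ε, hε, hcon⟩ := hcon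
  -- choose bad pseudo-orbits
  have hsel : ∀ n : ℕ, ∃ x ∈ PseudoOrbits (⇑f) (min δ (((n:ℝ)+1)⁻¹)),
      ε < dist (Sh x) (x 0) := by
    intro n
    exact hcon _ (lt_min hδ (by positivity)) (min_le_left _ _)
  choose x hxmem hxbad using hsel
  have hxδ : ∀ n, x n ∈ PseudoOrbits (⇑f) δ :=
    fun n => pseudoOrbits_mono f (min_le_left _ _) (hxmem n)
  have hcomp : IsCompact (PseudoOrbits (⇑f) δ) :=
    (isClosed_pseudoOrbits f hf δ).isCompact
  obtain ⟨y, hymem, φ, hφmono, hφtend⟩ := hcomp.tendsto_subseq hxδ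
  -- y is a true orbit
  have hyorb : ∀ i : ℤ, y (i + 1) = f (y i) := by
    intro i
    have h1 : Tendsto (fun n => dist ((x (φ n)) (i+1)) (f ((x (φ n)) i))) atTop
        (𝓝 (dist (y (i+1)) (f (y i)))) := by
      exact ((tendsto_pi_nhds.1 hφtend (i+1)).dist
        ((hf.tendsto _).comp (tendsto_pi_nhds.1 hφtend i)))
    have h0 : Tendsto (fun n : ℕ => ((n:ℝ)+1)⁻¹) atTop (𝓝 0) :=
      tendsto_one_div_add_atTop_nhds_zero_nat.congr (by intro n; rw [one_div])
    have hle : dist (y (i+1)) (f (y i)) ≤ 0 := by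
      refine le_of_tendsto_of_tendsto' h1 h0 fun n => ?_
      refine le_trans ((hxmem (φ n) i).trans (min_le_right _ _)) ?_
      apply inv_anti₀ (by positivity)
      have : (n:ℝ) ≤ φ n := by exact_mod_cast hφmono.le_apply
      linarith
    exact dist_le_zero.1 hle
  have hy : y = orbitMap f (y 0) := eq_orbitMap f hyorb
  -- Sh (x (φ n)) → Sh y = y 0
  have htendW : Tendsto (fun n => x (φ n)) atTop (𝓝[PseudoOrbits (⇑f) δ] y) :=
    tendsto_nhdsWithin_of_tendsto_nhds_of_eventually_within _ hφtend
      (Eventually.of_forall fun n => hxδ (φ n))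
  have hShtend : Tendsto (fun n => Sh (x (φ n))) atTop (𝓝 (Sh y)) :=
    (hcont y hymem).tendsto.comp htendW
  have hSh0 : Sh y = y 0 := by nth_rewrite 1 [hy]; rw [horb]
  have hx0 : Tendsto (fun n => (x (φ n)) 0) atTop (𝓝 (y 0)) :=
    tendsto_pi_nhds.1 hφtend 0
  have hdtend : Tendsto (fun n => dist (Sh (x (φ n))) ((x (φ n)) 0)) atTop (𝓝 0) := by
    have := hShtend.dist hx0
    rwa [hSh0, dist_self] at this
  have : ε ≤ 0 := ge_of_tendsto hdtend (Eventually.of_forall fun n => (hxbad (φ n)).le)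
  linarith

section Forward
variable {M : Type*} [MetricSpace M] [CompactSpace M]

lemma forward_direction (f : Equiv.Perm M) (hf : Continuous (⇑f))
    (hf' : Continuous (⇑f.symm)) (hexp : Expansive f) (hsh : ShadowingProperty f) :
    ∃ δ : ℝ, ∃ Sh : (ℤ → M) → M,
      IsShadowingMap f δ Sh ∧ ShiftInvariant f δ Sh ∧ DynInvariant f δ Sh := by
  classical
  obtain ⟨ξ, hξ, hexp⟩ := hexp
  set ε : ℝ := ξ / 3 with hεdef
  have hε : 0 < ε := by positivity
  -- uniqueness of ε-shadowing points
  have huniq : ∀ (x : ℤ → M) (p q : M), (∀ i : ℤ, dist ((f ^ i) p) (x i) ≤ ε) →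
      (∀ i : ℤ, dist ((f ^ i) q) (x i) ≤ ε) → p = q := by
    intro x p q hp hq
    by_contra hne
    obtain ⟨i, hi⟩ := hexp p q hne
    have h1 := hp i
    have h2 := hq i
    have h3 := dist_triangle ((f ^ i) p) (x i) ((f ^ i) q)
    rw [dist_comm (x i)] at h3
    simp only [hεdef] at h1 h2
    linarith
  -- uniform continuity moduli
  have huc : ∀ ε' > (0:ℝ), ∃ η > (0:ℝ), ∀ a b : M, dist a b ≤ η → dist (f a) (f b) ≤ ε' := by
    intro ε' hε'
    obtain ⟨η, hη, h⟩ := Metric.uniformContinuous_iff.1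
      (CompactSpace.uniformContinuous_of_continuous hf) ε' hε'
    exact ⟨η / 2, by positivity, fun a b hab => (h (lt_of_le_of_lt hab (by linarith))).le⟩
  obtain ⟨η₁, hη₁, hη₁uc⟩ := huc ε hε
  set ε₀ : ℝ := min ε η₁ with hε₀def
  have hε₀ : 0 < ε₀ := lt_min hε hη₁
  have hε₀ε : ε₀ ≤ ε := min_le_left _ _
  have h0uc : ∀ a b : M, dist a b ≤ ε₀ → dist (f a) (f b) ≤ ε :=
    fun a b hab => hη₁uc a b (hab.trans (min_le_right _ _))
  obtain ⟨δ, hδ, hδsh⟩ := hsh ε₀ hε₀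
  obtain ⟨η₂, hη₂, hη₂uc⟩ := huc δ hδ
  set δ' : ℝ := min δ η₂ with hδ'def
  -- the shadowing map
  set Sh : (ℤ → M) → M := fun x =>
    if h : ∃ p : M, ∀ i : ℤ, dist ((f ^ i) p) (x i) ≤ ε₀ then h.choose else x 0 with hShdef
  have hShA : ∀ x ∈ PseudoOrbits (⇑f) δ, ∀ i : ℤ, dist ((f ^ i) (Sh x)) (x i) ≤ ε₀ := by
    intro x hx
    obtain ⟨p, hp⟩ := hδsh x hx
    have h : ∃ p : M, ∀ i : ℤ, dist ((f ^ i) p) (x i) ≤ ε₀ := ⟨p, hp⟩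
    simp only [hShdef, dif_pos h]
    exact h.choose_spec
  have hShU : ∀ x ∈ PseudoOrbits (⇑f) δ, ∀ q : M,
      (∀ i : ℤ, dist ((f ^ i) q) (x i) ≤ ε) → Sh x = q := by
    intro x hx q hq
    exact huniq x (Sh x) q (fun i => (hShA x hx i).trans hε₀ε) hq
  have horb : ∀ p : M, Sh (orbitMap f p) = p := by
    intro p
    refine hShU _ (orbitMap_mem f hδ.le p) p fun i => ?_
    simp [orbitMap]
    exact hε.le
  -- shift identity
  have hshiftIter : ∀ x ∈ PseudoOrbits (⇑f) δ, ∀ i : ℤ,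
      Sh (shiftIter i x) = (f ^ i) (Sh x) := by
    intro x hx i
    refine hShU _ (shiftIter_mem f hx i) _ fun j => ?_
    rw [zpow_add_apply]
    exact (hShA x hx (j + i)).trans hε₀ε
  -- continuity
  have hcont : ContinuousOn Sh (PseudoOrbits (⇑f) δ) := by
    intro x hx
    rw [ContinuousWithinAt]
    rw [Filter.tendsto_iff_seq_tendsto]
    intro u hu
    have hu1 : Filter.Tendsto u Filter.atTop (nhds x) := hu.mono_right nhdsWithin_le_nhds
    have hmem : ∀ᶠ n in Filter.atTop, u n ∈ PseudoOrbits (⇑f) δ := hu self_mem_nhdsWithin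
    apply Filter.tendsto_of_subseq_tendsto
    intro ns hns
    obtain ⟨q, -, ψ, hψmono, hψtend⟩ := isCompact_univ.tendsto_subseq
      (x := fun n => Sh (u (ns n))) (fun n => Set.mem_univ _)
    refine ⟨ψ, ?_⟩
    have hmem' : ∀ᶠ n in Filter.atTop, u (ns (ψ n)) ∈ PseudoOrbits (⇑f) δ :=
      ((hns.comp hψmono.tendsto_atTop)).eventually hmem
    have hu2 : Filter.Tendsto (fun n => u (ns (ψ n))) Filter.atTop (nhds x) :=
      hu1.comp (hns.comp hψmono.tendsto_atTop)
    have hqsh : ∀ i : ℤ, dist ((f ^ i) q) (x i) ≤ ε := by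
      intro i
      have h1 : Filter.Tendsto (fun n => dist ((f ^ i) (Sh (u (ns (ψ n))))) (u (ns (ψ n)) i))
          Filter.atTop (nhds (dist ((f ^ i) q) (x i))) := by
        exact (((zpow_continuous f hf hf' i).tendsto q).comp hψtend).dist
          (tendsto_pi_nhds.1 hu2 i)
      refine le_of_tendsto h1 ?_
      filter_upwards [hmem'] with n hn
      exact (hShA _ hn i).trans hε₀ε
    have : q = Sh x := (hShU x hx q hqsh).symm
    rwa [← this]
  refine ⟨δ, Sh, ⟨⟨hδ, hcont, horb⟩, ?_⟩, ?_, ?_⟩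
  · -- ShadowingMapCond
    intro ε' hε'
    refine ⟨δ, hδ, le_refl δ, fun x hx i => ?_⟩
    rw [hshiftIter x hx i, dist_self]
    exact hε'.le
  · -- ShiftInvariant
    intro x hx
    have h1 : shiftSeq x = shiftIter 1 x := by
      funext i; rfl
    rw [h1, hshiftIter x hx 1, zpow_one]
  · -- DynInvariant
    refine ⟨δ', lt_min hδ hη₂, min_le_left _ _, fun x hx => ?_⟩
    have hxδ : x ∈ PseudoOrbits (⇑f) δ := pseudoOrbits_mono f (min_le_left _ _) hx
    have hfx : (fun i : ℤ => f (x i)) ∈ PseudoOrbits (⇑f) δ := by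
      intro i
      exact hη₂uc _ _ ((hx i).trans (min_le_right _ _))
    refine ⟨hfx, hShU _ hfx _ fun i => ?_⟩
    have h2 : (f ^ i) (f (Sh x)) = f ((f ^ i) (Sh x)) := by
      calc (f ^ i) (f (Sh x)) = (f ^ i) ((f ^ (1:ℤ)) (Sh x)) := by rw [zpow_one]
        _ = (f ^ (i + 1)) (Sh x) := zpow_add_apply f i 1 _
        _ = f ((f ^ i) (Sh x)) := zpow_succ_apply f i _
    rw [h2]
    exact h0uc _ _ (hShA x hxδ i)

end Forward

section Backward
variable {M : Type*} [MetricSpace M] [CompactSpace M]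

lemma backward_direction (f : Equiv.Perm M) (hf : Continuous (⇑f))
    (hf' : Continuous (⇑f.symm)) {δ : ℝ} {Sh : (ℤ → M) → M}
    (hmap : IsShadowingMap f δ Sh) (hshift : ShiftInvariant f δ Sh)
    (hdyn : DynInvariant f δ Sh) : Expansive f ∧ ShadowingProperty f := by
  obtain ⟨⟨hδ, hcont, horb⟩, hcond⟩ := hmap
  obtain ⟨δ', hδ', hδ'δ, hdyn⟩ := hdyn
  constructor
  · -- Expansivity with constant δ'
    refine ⟨δ', hδ', fun p q hne => ?_⟩
    by_contra hcon
    push_neg at hcon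
    apply hne
    -- connecting sequences at every index
    set c : ℤ → ℤ → M := fun k i => if i < k then (f ^ i) p else (f ^ i) q with hcdef
    have hcmem : ∀ k : ℤ, c k ∈ PseudoOrbits (⇑f) δ' := by
      intro k i
      by_cases h1 : i + 1 < k
      · have h2 : i < k := by omega
        simp only [hcdef, if_pos h1, if_pos h2, zpow_succ_apply, dist_self]
        exact hδ'.le
      · by_cases h2 : i < k
        · have hk : i + 1 = k := by omega
          simp only [hcdef, if_neg h1, if_pos h2]
          rw [← zpow_succ_apply, dist_comm]
          exact hcon (i + 1)
        · simp only [hcdef, if_neg h1, if_neg h2, zpow_succ_apply, dist_self]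
          exact hδ'.le
    have hcmemδ : ∀ k : ℤ, c k ∈ PseudoOrbits (⇑f) δ :=
      fun k => pseudoOrbits_mono f hδ'δ (hcmem k)
    -- shift identity : σ (c k) = f ∘ c (k-1)
    have hshiftc : ∀ k : ℤ, shiftSeq (c k) = fun i => f (c (k - 1) i) := by
      intro k
      funext i
      by_cases h : i + 1 < k
      · have h2 : i < k - 1 := by omega
        simp only [shiftSeq, hcdef, if_pos h, if_pos h2, zpow_succ_apply]
      · have h2 : ¬ i < k - 1 := by omega
        simp only [shiftSeq, hcdef, if_neg h, if_neg h2, zpow_succ_apply]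
    have hkey : ∀ k : ℤ, Sh (c k) = Sh (c (k - 1)) := by
      intro k
      have h1 : Sh (shiftSeq (c k)) = f (Sh (c k)) := hshift _ (hcmemδ k)
      have h2 : Sh (fun i : ℤ => f (c (k - 1) i)) = f (Sh (c (k - 1))) :=
        (hdyn _ (hcmem (k - 1))).2
      apply f.injective
      rw [← h1, ← h2, hshiftc k]
    have hconst : ∀ k : ℤ, Sh (c k) = Sh (c 0) := by
      intro k
      induction k using Int.induction_on with
      | zero => rfl
      | succ n ih =>
          have := hkey ((n : ℤ) + 1)
          simp only [add_sub_cancel_right] at this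
          rw [this, ih]
      | pred n ih =>
          have := hkey (-(n : ℤ))
          rw [← this]
          exact ih
    -- limit k → +∞ : c k → orbit of p
    have hlimp : Filter.Tendsto (fun n : ℕ => c (n : ℤ)) Filter.atTop (nhds (orbitMap f p)) := by
      rw [tendsto_pi_nhds]
      intro i
      apply Filter.Tendsto.congr' _ tendsto_const_nhds
      rw [Filter.EventuallyEq, Filter.eventually_atTop]
      refine ⟨i.toNat + 1, fun n hn => ?_⟩
      have : i < (n : ℤ) := by omega
      simp only [hcdef, if_pos this, orbitMap]
    have hlimq : Filter.Tendsto (fun n : ℕ => c (-(n : ℤ))) Filter.atTop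
        (nhds (orbitMap f q)) := by
      rw [tendsto_pi_nhds]
      intro i
      apply Filter.Tendsto.congr' _ tendsto_const_nhds
      rw [Filter.EventuallyEq, Filter.eventually_atTop]
      refine ⟨(-i).toNat, fun n hn => ?_⟩
      have : ¬ i < -(n : ℤ) := by omega
      simp only [hcdef, if_neg this, orbitMap]
    -- use continuity of Sh at true orbits
    have hSlim : ∀ (r : M) (u : ℕ → ℤ → M), (∀ n, u n ∈ PseudoOrbits (⇑f) δ) →
        Filter.Tendsto u Filter.atTop (nhds (orbitMap f r)) →
        Filter.Tendsto (fun n => Sh (u n)) Filter.atTop (nhds r) := by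
      intro r u hmem htend
      have h1 : Filter.Tendsto u Filter.atTop (nhdsWithin (orbitMap f r)
          (PseudoOrbits (⇑f) δ)) :=
        tendsto_nhdsWithin_of_tendsto_nhds_of_eventually_within _ htend
          (Filter.Eventually.of_forall hmem)
      have h2 := (hcont _ (orbitMap_mem f hδ.le r)).tendsto.comp h1
      rwa [horb r] at h2
    have hp : Filter.Tendsto (fun n : ℕ => Sh (c (n : ℤ))) Filter.atTop (nhds p) :=
      hSlim p _ (fun n => hcmemδ _) hlimp
    have hq : Filter.Tendsto (fun n : ℕ => Sh (c (-(n : ℤ)))) Filter.atTop (nhds q) :=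
      hSlim q _ (fun n => hcmemδ _) hlimq
    have hp' : Filter.Tendsto (fun _ : ℕ => Sh (c 0)) Filter.atTop (nhds p) := by
      apply hp.congr; intro n; rw [hconst]
    have hq' : Filter.Tendsto (fun _ : ℕ => Sh (c 0)) Filter.atTop (nhds q) := by
      apply hq.congr; intro n; rw [hconst]
    exact tendsto_nhds_unique hp' hq'
  · -- Shadowing property
    intro ε hε
    obtain ⟨γ₁, hγ₁, hγ₁δ, h1⟩ := shadow_at_zero f hf hδ hcont horb (ε / 2) (by positivity)
    obtain ⟨γ₂, hγ₂, hγ₂δ, h2⟩ := hcond (ε / 2) (by positivity)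
    refine ⟨min γ₁ γ₂, lt_min hγ₁ hγ₂, fun x hx => ⟨Sh x, fun i => ?_⟩⟩
    have hx1 : x ∈ PseudoOrbits (⇑f) γ₁ := pseudoOrbits_mono f (min_le_left _ _) hx
    have hx2 : x ∈ PseudoOrbits (⇑f) γ₂ := pseudoOrbits_mono f (min_le_right _ _) hx
    have ha := h2 x hx2 i
    have hb := h1 (shiftIter i x) (shiftIter_mem f hx1 i)
    have hc : (shiftIter i x) 0 = x i := by simp [shiftIter]
    rw [hc] at hb
    calc dist ((f ^ i) (Sh x)) (x i)
        ≤ dist ((f ^ i) (Sh x)) (Sh (shiftIter i x)) + dist (Sh (shiftIter i x)) (x i) :=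
          dist_triangle _ _ _
      _ ≤ ε / 2 + ε / 2 := add_le_add ha hb
      _ = ε := by ring

end Backward

/-- Theorem 7.5: `f` is topologically hyperbolic (expansive with
shadowing) iff `f` admits a shadowing map which is shift-invariant and
dynamically-invariant. -/
theorem stmt17 {M : Type*} [MetricSpace M] [CompactSpace M]
    (f : Equiv.Perm M) (hf : Continuous (⇑f)) (hf' : Continuous (⇑f.symm)) :
    (Expansive f ∧ ShadowingProperty f) ↔
    ∃ δ : ℝ, ∃ Sh : (ℤ → M) → M,
      IsShadowingMap f δ Sh ∧ ShiftInvariant f δ Sh ∧ DynInvariant f δ Sh := by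
  constructor
  · rintro ⟨h1, h2⟩
    exact forward_direction f hf hf' h1 h2
  · rintro ⟨δ, Sh, hmap, hshift, hdyn⟩
    exact backward_direction f hf hf' hmap hshift hdyn
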